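/- arXiv:2202.05121 — 11 statements merged into one kernel-verified Lean document; each statement's English description precedes it below -/
import Mathlib

section
/- Let A and V be Jordan algebras over a field k of characteristic ≠ 2 and let ◁ : V × A → V be a right action of A on V satisfying for all a, b ∈ A and x, y ∈ V: (R1) x(x²◁a) = x²(x◁a); (R2) 2[((x◁a)◁b)◁a − (x◁a)◁(ba) + ((x◁a)◁b)x − (x◁a)(x◁b)] = x²◁(ba) − (x²◁b)◁a + (x◁b)◁a² − x◁(ba²); (R3) 2[((x◁a)y)◁a − (x◁a)(y◁a) + ((x◁a)y)x − (x◁a)(xy)] = (xy)◁a² − (y◁a²)x + x²(y◁a) − (x²y)◁a. Then A × V with the multiplication (a, x) ∘ (b, y) = (ab, x◁b + y◁a + xy) is a Jordan algebra (the right semidirect product A ⋊ V). -/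
/-- A bilinear multiplication `m` on `A` makes `A` a Jordan algebra:
it is commutative and satisfies the Jordan identity `(a² b) a = a² (b a)`. -/
def IsJordanAlg {k A : Type*} [Field k] [AddCommGroup A] [Module k A]
    (m : A →ₗ[k] A →ₗ[k] A) : Prop :=
  (∀ a b, m a b = m b a) ∧ ∀ a b, m (m (m a a) b) a = m (m a a) (m b a)

/-- A (possibly set-relativized) bilinear-to-function version of the matched pair
conditions for Jordan algebras: `l = ◁ : V × A → V` is a right action,
`p = ▷ : V × A → A` is a left action, and the compatibilities (MP1)-(MP6) hold,
for all elements of `SA ⊆ A`, `SV ⊆ V`. -/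
def MPConds (k : Type*) {A V : Type*} [Field k] [AddCommGroup A] [Module k A]
    [AddCommGroup V] [Module k V]
    (mA : A → A → A) (mV : V → V → V)
    (l : V → A → V) (p : V → A → A) (SA : Set A) (SV : Set V) : Prop :=
  -- ◁ is a right action of A on V : (x ◁ a²) ◁ a = (x ◁ a) ◁ a²
  (∀ x ∈ SV, ∀ a ∈ SA, l (l x (mA a a)) a = l (l x a) (mA a a)) ∧
  -- ▷ is a left action of V on A : x ▷ (x² ▷ a) = x² ▷ (x ▷ a)
  (∀ x ∈ SV, ∀ a ∈ SA, p x (p (mV x x) a) = p (mV x x) (p x a)) ∧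
  -- (MP1)
  (∀ a ∈ SA, ∀ x ∈ SV,
      mA a (p x (mA a a)) + p (l x (mA a a)) a
        = mA (mA a a) (p x a) + p (l x a) (mA a a)) ∧
  -- (MP2)
  (∀ a ∈ SA, ∀ x ∈ SV,
      l x (p (mV x x) a) + mV (l (mV x x) a) x
        = l (mV x x) (p x a) + mV (mV x x) (l x a)) ∧
  -- (MP3)
  (∀ a ∈ SA, ∀ b ∈ SA, ∀ x ∈ SV,
      (2 : k) • (l (l (l x a) b) a + l x (mA (p x a) b) + l x (p (l x a) b)
          + mV (l (l x a) b) x)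
        + l (l (mV x x) b) a + l x (mA b (mA a a))
      = (2 : k) • (l (l x a) (mA b a) + l (l x a) (p x b) + l (l x b) (p x a)
          + mV (l x a) (l x b))
        + l (mV x x) (mA b a) + l (l x b) (mA a a)) ∧
  -- (MP4)
  (∀ a ∈ SA, ∀ x ∈ SV, ∀ y ∈ SV,
      (2 : k) • (p y (p x a) + p x (p y (p x a)) + p (l y (p x a)) a
          + p (mV (l x a) y) a)
        + p (mV (mV x x) y) a + p x (p y (mA a a))
      = (2 : k) • (mA (p y a) (p x a) + p (mV x y) (p x a) + p (l y a) (p x a)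
          + p (l x a) (p y a))
        + p (mV x x) (p y a) + p (mV x y) (mA a a)) ∧
  -- (MP5)
  (∀ a ∈ SA, ∀ x ∈ SV, ∀ y ∈ SV,
      (2 : k) • (l (l y (p x a)) a + l (mV (l x a) y) a + l x (p y (p x a))
          + mV (l y (p x a)) x + mV (mV (l x a) y) x)
        + l (mV (mV x x) y) a + l x (p y (mA a a)) + mV (l y (mA a a)) x
      = (2 : k) • (l (l x a) (p y a) + l (l y a) (p x a) + l (mV x y) (p x a)
          + mV (l x a) (mV x y) + mV (l x a) (l y a))
        + l (mV x x) (p y a) + l (mV x y) (mA a a) + mV (mV x x) (l y a)) ∧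
  -- (MP6)
  (∀ a ∈ SA, ∀ b ∈ SA, ∀ x ∈ SV,
      (2 : k) • (mA (mA (p x a) b) a + mA (p (l x a) b) a + p (l (l x a) b) a
          + p x (mA (p x a) b) + p x (p (l x a) b))
        + mA (p (mV x x) b) a + p (l (mV x x) b) a + p x (mA (mA a a) b)
      = (2 : k) • (mA (p x a) (mA a b) + p (l x a) (mA b a) + mA (p x a) (p x b)
          + p (l x b) (p x a) + p (l x a) (p x b))
        + p (mV x x) (mA b a) + p (l x b) (mA a a) + mA (mA a a) (p x b))

/-- `(A, V, ◁, ▷)` is a matched pair of Jordan algebras (bundled bilinear maps). -/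
def IsMPair {k A V : Type*} [Field k] [AddCommGroup A] [Module k A]
    [AddCommGroup V] [Module k V]
    (mA : A →ₗ[k] A →ₗ[k] A) (mV : V →ₗ[k] V →ₗ[k] V)
    (l : V →ₗ[k] A →ₗ[k] V) (p : V →ₗ[k] A →ₗ[k] A) : Prop :=
  MPConds k (fun a b => mA a b) (fun x y => mV x y) (fun x a => l x a) (fun x a => p x a)
    Set.univ Set.univ

/-- The bicrossed product multiplication on `A × V`:
`(a, x) ∘ (b, y) = (ab + x▷b + y▷a, x◁b + y◁a + xy)`. -/
def bimulJ {k A V : Type*} [Field k] [AddCommGroup A] [Module k A]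
    [AddCommGroup V] [Module k V]
    (mA : A →ₗ[k] A →ₗ[k] A) (mV : V →ₗ[k] V →ₗ[k] V)
    (l : V →ₗ[k] A →ₗ[k] V) (p : V →ₗ[k] A →ₗ[k] A) :
    A × V → A × V → A × V :=
  fun z w =>
    (mA z.1 w.1 + p z.2 w.1 + p w.2 z.1, l z.2 w.1 + l w.2 z.1 + mV z.2 w.2)

/-- The left semidirect product multiplication on `A × V`:
`(a, x) ∘ (b, y) = (ab + x▷b + y▷a, xy)`. -/
def lsemimulJ {k A V : Type*} [Field k] [AddCommGroup A] [Module k A]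
    [AddCommGroup V] [Module k V]
    (mA : A →ₗ[k] A →ₗ[k] A) (mV : V →ₗ[k] V →ₗ[k] V)
    (p : V →ₗ[k] A →ₗ[k] A) : A × V → A × V → A × V :=
  fun z w => (mA z.1 w.1 + p z.2 w.1 + p w.2 z.1, mV z.2 w.2)

/-- The right semidirect product multiplication on `A × V`:
`(a, x) ∘ (b, y) = (ab, x◁b + y◁a + xy)`. -/
def rsemimulJ {k A V : Type*} [Field k] [AddCommGroup A] [Module k A]
    [AddCommGroup V] [Module k V]
    (mA : A →ₗ[k] A →ₗ[k] A) (mV : V →ₗ[k] V →ₗ[k] V)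
    (l : V →ₗ[k] A →ₗ[k] V) : A × V → A × V → A × V :=
  fun z w => (mA z.1 w.1, l z.2 w.1 + l w.2 z.1 + mV z.2 w.2)

/-- `m : A × A → A` is a Jordan algebra multiplication: it is bilinear,
commutative and satisfies the Jordan identity. -/
def IsJordanMulFun (k : Type*) {A : Type*} [Field k] [AddCommGroup A] [Module k A]
    (m : A → A → A) : Prop :=
  (∀ z z' w, m (z + z') w = m z w + m z' w) ∧
  (∀ (c : k) (z w), m (c • z) w = c • m z w) ∧
  (∀ z w w', m z (w + w') = m z w + m z w') ∧
  (∀ (c : k) (z w), m z (c • w) = c • m z w) ∧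
  (∀ z w, m z w = m w z) ∧
  (∀ z w, m (m (m z z) w) z = m (m z z) (m w z))

/-- `r : B → A` is a deformation map of the matched pair `(A, B, ◁, ▷)`:
`r(xy) − r(x)r(y) = x▷r(y) + y▷r(x) − r(x◁r(y) + y◁r(x))`. -/
def IsDefMapB {k A B : Type*} [Field k] [AddCommGroup A] [Module k A]
    [AddCommGroup B] [Module k B]
    (mA : A →ₗ[k] A →ₗ[k] A) (mB : B →ₗ[k] B →ₗ[k] B)
    (l : B →ₗ[k] A →ₗ[k] B) (p : B →ₗ[k] A →ₗ[k] A) (r : B →ₗ[k] A) : Prop :=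
  ∀ x y, r (mB x y) - mA (r x) (r y)
    = p x (r y) + p y (r x) - r (l x (r y) + l y (r x))

/-- Equivalence of deformation maps: `r ∼ s` iff there is a `k`-linear
automorphism `σ` of `B` with
`σ(xy) − σ(x)σ(y) = σ(x)◁s(σ(y)) − σ(x◁r(y)) + σ(y)◁s(σ(x)) − σ(y◁r(x))`. -/
def DefEquivJ {k A B : Type*} [Field k] [AddCommGroup A] [Module k A]
    [AddCommGroup B] [Module k B]
    (mB : B →ₗ[k] B →ₗ[k] B) (l : B →ₗ[k] A →ₗ[k] B) (r s : B →ₗ[k] A) : Prop :=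
  ∃ σ : B →ₗ[k] B, Function.Bijective σ ∧ ∀ x y,
    σ (mB x y) - mB (σ x) (σ y)
      = l (σ x) (s (σ y)) - σ (l x (r y)) + l (σ y) (s (σ x)) - σ (l y (r x))

/-- given Jordan algebras `A`, `V` and a right action `◁ : V × A → V`
satisfying (R1)-(R3), the right semidirect product `A ⋊ V` is a Jordan algebra. -/
theorem statement3 {k A V : Type*} [Field k] [AddCommGroup A] [Module k A]
    [AddCommGroup V] [Module k V] (hchar : (2 : k) ≠ 0)
    (mA : A →ₗ[k] A →ₗ[k] A) (mV : V →ₗ[k] V →ₗ[k] V)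
    (l : V →ₗ[k] A →ₗ[k] V)
    (hA : IsJordanAlg mA) (hV : IsJordanAlg mV)
    -- ◁ is a right action : (x ◁ a²) ◁ a = (x ◁ a) ◁ a²
    (hact : ∀ (x : V) (a : A), l (l x (mA a a)) a = l (l x a) (mA a a))
    -- (R1)
    (hR1 : ∀ (a : A) (x : V), mV x (l (mV x x) a) = mV (mV x x) (l x a))
    -- (R2)
    (hR2 : ∀ (a b : A) (x : V),
      (2 : k) • (l (l (l x a) b) a - l (l x a) (mA b a) + mV (l (l x a) b) x
          - mV (l x a) (l x b))
        = l (mV x x) (mA b a) - l (l (mV x x) b) a + l (l x b) (mA a a)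
          - l x (mA b (mA a a)))
    -- (R3)
    (hR3 : ∀ (a : A) (x y : V),
      (2 : k) • (l (mV (l x a) y) a - mV (l x a) (l y a) + mV (mV (l x a) y) x
          - mV (l x a) (mV x y))
        = l (mV x y) (mA a a) - mV (l y (mA a a)) x + mV (mV x x) (l y a)
          - l (mV (mV x x) y) a) :
    IsJordanMulFun k (rsemimulJ mA mV l) := by
  
  refine ⟨?_, ?_, ?_, ?_, ?_, ?_⟩
  · intro z z' w
    simp only [rsemimulJ, Prod.fst_add, Prod.snd_add, map_add, LinearMap.add_apply,
      Prod.mk_add_mk]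
    exact Prod.ext rfl (by abel)
  · intro c z w
    simp only [rsemimulJ, Prod.smul_fst, Prod.smul_snd, map_smul, LinearMap.smul_apply,
      Prod.smul_mk, smul_add]
  · intro z w w'
    simp only [rsemimulJ, Prod.fst_add, Prod.snd_add, map_add, LinearMap.add_apply,
      Prod.mk_add_mk]
    exact Prod.ext rfl (by abel)
  · intro c z w
    simp only [rsemimulJ, Prod.smul_fst, Prod.smul_snd, map_smul, LinearMap.smul_apply,
      Prod.smul_mk, smul_add]
  · intro z w
    simp only [rsemimulJ]
    refine Prod.ext (hA.1 _ _) ?_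
    simp only []
    rw [hV.1 z.2 w.2]
    abel
  · intro z w
    obtain ⟨a, x⟩ := z
    obtain ⟨b, y⟩ := w
    simp only [rsemimulJ, map_add, LinearMap.add_apply]
    refine Prod.ext ?_ ?_
    · exact hA.2 a b
    · simp only []
      have e1 := hact y a
      have e2 := hR1 b x
      have e3 := hR2 a b x
      have e4 := hR3 a x y
      have e5 := hV.2 x y
      have c1 : l x (mA (mA a a) b) = l x (mA b (mA a a)) := by rw [hA.1]
      have c2 : l (mV y x) (mA a a) = l (mV x y) (mA a a) := by rw [hV.1 y x]
      have c3 : mV (l x a) (mV y x) = mV (l x a) (mV x y) := by rw [hV.1 y x]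
      have c6 : mV (l (mV x x) b) x = mV x (l (mV x x) b) := hV.1 _ _
      linear_combination (norm := module) e1 + e2 + e3 + e4 + e5 + c1 - c2 - (2:k) • c3 + c6
end

section
/- Let E be a Jordan algebra over a field k of characteristic ≠ 2, let A ⊆ E be a Jordan subalgebra, and suppose there is a Jordan algebra homomorphism p : E → A with p(a) = a for all a ∈ A. Then V := ker p is a Jordan subalgebra of E, the bilinear map x ◁ a := xa is a right action of A on V satisfying conditions (R1)–(R3), and the map ψ : A ⋊ V → E, ψ(a, x) = a + x, from the corresponding right semidirect product to E, is an isomorphism of Jordan algebras. -/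
/-- Partial linearization of the Jordan identity. -/
lemma jordan_lin {k E : Type*} [Field k] [AddCommGroup E] [Module k E]
    (hchar : (2 : k) ≠ 0) (m : E →ₗ[k] E →ₗ[k] E) (hE : IsJordanAlg m)
    (a c b : E) :
    (2 : k) • m (m (m a c) b) a + m (m (m a a) b) c
      = (2 : k) • m (m a c) (m b a) + m (m a a) (m b c) := by
  have h1 := hE.2 (a + c) b
  have h2 := hE.2 (a - c) b
  have h3 := hE.2 c b
  simp only [map_add, map_sub, LinearMap.add_apply, LinearMap.sub_apply,
    hE.1 c a] at h1 h2
  apply smul_right_injective E hchar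
  simp only []
  linear_combination (norm := module) h1 - h2 - (2 : k) • h3

/-- if `A ⊆ E` is a Jordan subalgebra and `P : E → A` is a Jordan
algebra homomorphism with `P a = a` for `a ∈ A`, then `V := ker P` is a Jordan
subalgebra of `E`, `x ◁ a := xa` is a right action of `A` on `V` satisfying
(R1)-(R3), and `ψ : A ⋊ V → E`, `ψ(a, x) = a + x`, is an isomorphism of Jordan
algebras. -/
theorem statement5 {k E : Type*} [Field k] [AddCommGroup E] [Module k E]
    (hchar : (2 : k) ≠ 0)
    (m : E →ₗ[k] E →ₗ[k] E) (hE : IsJordanAlg m)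
    (A : Submodule k E) (hAc : ∀ a ∈ A, ∀ b ∈ A, m a b ∈ A)
    (P : E →ₗ[k] E)
    (hPrange : ∀ e, P e ∈ A)
    (hPid : ∀ a ∈ A, P a = a)
    (hPmul : ∀ e f, P (m e f) = m (P e) (P f)) :
    -- V = ker P is a Jordan subalgebra of E
    (∀ x ∈ LinearMap.ker P, ∀ y ∈ LinearMap.ker P, m x y ∈ LinearMap.ker P) ∧
    -- ◁ : V × A → V, x ◁ a = xa, takes values in V
    (∀ x ∈ LinearMap.ker P, ∀ a ∈ A, m x a ∈ LinearMap.ker P) ∧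
    -- ◁ is a right action : (x ◁ a²) ◁ a = (x ◁ a) ◁ a²
    (∀ x ∈ LinearMap.ker P, ∀ a ∈ A, m (m x (m a a)) a = m (m x a) (m a a)) ∧
    -- (R1)
    (∀ a ∈ A, ∀ x ∈ LinearMap.ker P,
      m x (m (m x x) a) = m (m x x) (m x a)) ∧
    -- (R2)
    (∀ a ∈ A, ∀ b ∈ A, ∀ x ∈ LinearMap.ker P,
      (2 : k) • (m (m (m x a) b) a - m (m x a) (m b a) + m (m (m x a) b) x
          - m (m x a) (m x b))
        = m (m x x) (m b a) - m (m (m x x) b) a + m (m x b) (m a a)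
          - m x (m b (m a a))) ∧
    -- (R3)
    (∀ a ∈ A, ∀ x ∈ LinearMap.ker P, ∀ y ∈ LinearMap.ker P,
      (2 : k) • (m (m (m x a) y) a - m (m x a) (m y a) + m (m (m x a) y) x
          - m (m x a) (m x y))
        = m (m x y) (m a a) - m (m y (m a a)) x + m (m x x) (m y a)
          - m (m (m x x) y) a) ∧
    -- ψ : A ⋊ V → E, ψ(a, x) = a + x, is bijective
    Function.Bijective
      (fun z : A × (LinearMap.ker P) => (z.1 : E) + (z.2 : E)) ∧
    -- ψ is multiplicative w.r.t. the right semidirect product structure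
    (∀ a ∈ A, ∀ b ∈ A, ∀ x ∈ LinearMap.ker P, ∀ y ∈ LinearMap.ker P,
      m (a + x) (b + y) = m a b + (m x b + m y a + m x y)) := by
  have hlin := jordan_lin hchar m hE
  refine ⟨?_, ?_, ?_, ?_, ?_, ?_, ?_, ?_⟩
  · intro x hx y hy
    rw [LinearMap.mem_ker] at hx hy ⊢
    simp [hPmul, hx, hy]
  · intro x hx a _
    rw [LinearMap.mem_ker] at hx ⊢
    simp [hPmul, hx]
  · intro x _ a _
    rw [hE.1 x (m a a), hE.2 a x, hE.1 (m a a) (m x a)]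
  · intro a _ x _
    rw [hE.1 x (m (m x x) a), hE.2 x a, hE.1 a x]
  · intro a _ b _ x _
    have e1 := hlin a x b
    have e2 := hlin x a b
    simp only [hE.1 a x, hE.1 b x] at e1 e2
    rw [hE.1 b (m a a), hE.1 x (m (m a a) b), hE.1 (m x b) (m a a)]
    linear_combination (norm := module) e1 + e2
  · intro a _ x _ y _
    have e1 := hlin a x y
    have e2 := hlin x a y
    simp only [hE.1 a x, hE.1 y x] at e1 e2
    rw [hE.1 y (m a a), hE.1 (m x y) (m a a)]
    linear_combination (norm := module) e1 + e2
  · constructor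
    · rintro ⟨a, x⟩ ⟨b, y⟩ h
      simp only at h
      have ha : (a : E) = b := by
        have := congrArg P h
        simpa [map_add, hPid _ a.2, hPid _ b.2,
          LinearMap.mem_ker.mp x.2, LinearMap.mem_ker.mp y.2] using this
      have hx : (x : E) = y := by
        have := h
        rw [ha] at this
        exact add_left_cancel this
      exact Prod.ext (Subtype.ext ha) (Subtype.ext hx)
    · intro e
      have hker : e - P e ∈ LinearMap.ker P := by
        rw [LinearMap.mem_ker, map_sub, hPid _ (hPrange e), sub_self]
      exact ⟨(⟨P e, hPrange e⟩, ⟨e - P e, hker⟩), by simp⟩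
  · intro a _ b _ x _ y _
    simp only [map_add, LinearMap.add_apply]
    rw [hE.1 a y]
    abel
end

section
/- Let E be a Jordan algebra over a field k of characteristic ≠ 2 that factorizes through Jordan subalgebras A and V (i.e. E = A + V and A ∩ V = {0}), let π_A : E → A be the linear projection onto A along V, and let (A, V, ◁, ▷) be the matched pair with x ▷ a := π_A(xa) and x ◁ a := xa − π_A(xa). Then the map φ : A ⋈ V → E, φ(a, x) = a + x, from the bicrossed product A ⋈ V to E, is an isomorphism of Jordan algebras. -/
/-- if a Jordan algebra `E` factorizes through Jordan subalgebras
`A` and `V`, with canonical matched pair actions `x ▷ a := P(xa)`,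
`x ◁ a := xa − P(xa)`, then `φ : A ⋈ V → E`, `φ(a, x) = a + x`, is an
isomorphism of Jordan algebras. -/
theorem statement8 {k E : Type*} [Field k] [AddCommGroup E] [Module k E]
    (hchar : (2 : k) ≠ 0)
    (m : E →ₗ[k] E →ₗ[k] E) (hE : IsJordanAlg m)
    (A V : Submodule k E)
    (hAc : ∀ a ∈ A, ∀ b ∈ A, m a b ∈ A)
    (hVc : ∀ x ∈ V, ∀ y ∈ V, m x y ∈ V)
    (hsum : A ⊔ V = ⊤) (hint : A ⊓ V = ⊥)
    (P : E →ₗ[k] E) (hPrange : ∀ e, P e ∈ A) (hPker : ∀ x ∈ V, P x = 0)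
    (hPid : ∀ a ∈ A, P a = a)
    (pmap lmap : E → E → E)
    (hp : ∀ x a, pmap x a = P (m x a))
    (hl : ∀ x a, lmap x a = m x a - P (m x a)) :
    -- φ is linear
    (∀ z w : A × V, ((z + w).1 : E) + ((z + w).2 : E)
        = ((z.1 : E) + (z.2 : E)) + ((w.1 : E) + (w.2 : E))) ∧
    (∀ (c : k) (z : A × V), (((c • z).1 : E) + ((c • z).2 : E))
        = c • ((z.1 : E) + (z.2 : E))) ∧
    -- φ is bijective
    Function.Bijective (fun z : A × V => (z.1 : E) + (z.2 : E)) ∧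
    -- φ is multiplicative w.r.t. the bicrossed product multiplication
    (∀ a ∈ A, ∀ b ∈ A, ∀ x ∈ V, ∀ y ∈ V,
      m (a + x) (b + y)
        = (m a b + pmap x b + pmap y a) + (lmap x b + lmap y a + m x y)) := by
  refine ⟨?_, ?_, ⟨?_, ?_⟩, ?_⟩
  · intro z w; simp [Prod.fst_add, Prod.snd_add]; abel
  · intro c z; simp [smul_add]
  · -- injective
    intro z w h
    simp only at h
    have hd : (z.1 : E) - w.1 = (w.2 : E) - z.2 := by
      rw [sub_eq_sub_iff_add_eq_add]; exact h.trans (add_comm _ _)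
    have hA : (z.1 : E) - w.1 ∈ A := sub_mem z.1.2 w.1.2
    have hV : (z.1 : E) - w.1 ∈ V := hd ▸ sub_mem w.2.2 z.2.2
    have h0 : (z.1 : E) - w.1 = 0 := by
      have := hint ▸ Submodule.mem_inf.mpr ⟨hA, hV⟩
      simpa using this
    have h0' : (w.2 : E) - z.2 = 0 := by rw [← hd, h0]
    exact Prod.ext (Subtype.ext (sub_eq_zero.mp h0))
      (Subtype.ext (sub_eq_zero.mp h0')).symm
  · -- surjective
    intro e
    have he : e ∈ A ⊔ V := by rw [hsum]; trivial
    obtain ⟨a, ha, x, hx, hax⟩ := Submodule.mem_sup.mp he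
    exact ⟨(⟨a, ha⟩, ⟨x, hx⟩), hax⟩
  · intro a ha b hb x hx y hy
    rw [hp, hp, hl, hl]
    have : m (a + x) (b + y) = m a b + m x b + m y a + m x y := by
      simp only [map_add, LinearMap.add_apply]
      rw [hE.1 a y]
      abel
    rw [this]; abel
end

section
/- Let (A, V, ◁, ▷) and (A', V', ◁', ▷') be matched pairs of Jordan algebras over a field k of characteristic ≠ 2 with bicrossed products A ⋈ V and A' ⋈' V', and let r : A → A', s : A → V', t : V → A', q : V → V' be linear maps. Then the linear map ψ : A ⋈ V → A' ⋈' V', ψ(a, x) = (r(a) + t(x), s(a) + q(x)), is a Jordan algebra homomorphism if and only if for all a, b ∈ A and x, y ∈ V: (C1) r(ab) − r(a)r(b) = s(a)▷'r(b) + s(b)▷'r(a); (C2) s(ab) − s(a)s(b) = s(a)◁'r(b) + s(b)◁'r(a); (C3) t(xy) − t(x)t(y) = q(x)▷'t(y) + q(y)▷'t(x); (C4) q(xy) − q(x)q(y) = q(x)◁'t(y) + q(y)◁'t(x); (C5) r(x▷a) + t(x◁a) = r(a)t(x) + s(a)▷'t(x) + q(x)▷'r(a); (C6) s(x▷a) +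 q(x◁a) = s(a)q(x) + s(a)◁'t(x) + q(x)◁'r(a). -/
/-- for matched pairs `(A, V, ◁, ▷)`, `(A', V', ◁', ▷')` and linear
maps `r, s, t, q`, the map `ψ(a, x) = (r a + t x, s a + q x)` is a Jordan algebra
homomorphism `A ⋈ V → A' ⋈' V'` if and only if (C1)-(C6) hold. -/
theorem statement9 {k A V A' V' : Type*} [Field k]
    [AddCommGroup A] [Module k A] [AddCommGroup V] [Module k V]
    [AddCommGroup A'] [Module k A'] [AddCommGroup V'] [Module k V']
    (hchar : (2 : k) ≠ 0)
    (mA : A →ₗ[k] A →ₗ[k] A) (mV : V →ₗ[k] V →ₗ[k] V)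
    (l : V →ₗ[k] A →ₗ[k] V) (p : V →ₗ[k] A →ₗ[k] A)
    (mA' : A' →ₗ[k] A' →ₗ[k] A') (mV' : V' →ₗ[k] V' →ₗ[k] V')
    (l' : V' →ₗ[k] A' →ₗ[k] V') (p' : V' →ₗ[k] A' →ₗ[k] A')
    (hA : IsJordanAlg mA) (hV : IsJordanAlg mV)
    (hA' : IsJordanAlg mA') (hV' : IsJordanAlg mV')
    (hmp : IsMPair mA mV l p) (hmp' : IsMPair mA' mV' l' p')
    (r : A →ₗ[k] A') (s : A →ₗ[k] V') (t : V →ₗ[k] A') (q : V →ₗ[k] V') :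
    -- ψ is multiplicative
    (∀ z w : A × V,
        ((r (bimulJ mA mV l p z w).1 + t (bimulJ mA mV l p z w).2,
            s (bimulJ mA mV l p z w).1 + q (bimulJ mA mV l p z w).2) : A' × V')
          = bimulJ mA' mV' l' p'
              (r z.1 + t z.2, s z.1 + q z.2) (r w.1 + t w.2, s w.1 + q w.2))
      ↔
    -- (C1)-(C6)
      ((∀ a b, r (mA a b) - mA' (r a) (r b) = p' (s a) (r b) + p' (s b) (r a)) ∧
       (∀ a b, s (mA a b) - mV' (s a) (s b) = l' (s a) (r b) + l' (s b) (r a)) ∧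
       (∀ x y, t (mV x y) - mA' (t x) (t y) = p' (q x) (t y) + p' (q y) (t x)) ∧
       (∀ x y, q (mV x y) - mV' (q x) (q y) = l' (q x) (t y) + l' (q y) (t x)) ∧
       (∀ (a : A) (x : V), r (p x a) + t (l x a)
          = mA' (r a) (t x) + p' (s a) (t x) + p' (q x) (r a)) ∧
       (∀ (a : A) (x : V), s (p x a) + q (l x a)
          = mV' (s a) (q x) + l' (s a) (t x) + l' (q x) (r a))) := by
  constructor
  · intro h
    refine ⟨?_, ?_, ?_, ?_, ?_, ?_⟩
    · intro a b
      have hab := h (a, 0) (b, 0)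
      simp only [bimulJ, map_zero, LinearMap.zero_apply, zero_add, add_zero,
        Prod.mk.injEq] at hab
      rw [hab.1]; abel
    · intro a b
      have hab := h (a, 0) (b, 0)
      simp only [bimulJ, map_zero, LinearMap.zero_apply, zero_add, add_zero,
        Prod.mk.injEq] at hab
      rw [hab.2]; abel
    · intro x y
      have hab := h (0, x) (0, y)
      simp only [bimulJ, map_zero, LinearMap.zero_apply, zero_add, add_zero,
        Prod.mk.injEq] at hab
      rw [hab.1]; abel
    · intro x y
      have hab := h (0, x) (0, y)
      simp only [bimulJ, map_zero, LinearMap.zero_apply, zero_add, add_zero,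
        Prod.mk.injEq] at hab
      rw [hab.2]; abel
    · intro a x
      have hxa := h (0, x) (a, 0)
      simp only [bimulJ, map_zero, LinearMap.zero_apply, zero_add, add_zero,
        Prod.mk.injEq] at hxa
      rw [hxa.1, hA'.1 (t x) (r a)]; abel
    · intro a x
      have hxa := h (0, x) (a, 0)
      simp only [bimulJ, map_zero, LinearMap.zero_apply, zero_add, add_zero,
        Prod.mk.injEq] at hxa
      rw [hxa.2, hV'.1 (q x) (s a)]; abel
  · rintro ⟨c1, c2, c3, c4, c5, c6⟩ ⟨a, x⟩ ⟨b, y⟩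
    simp only [bimulJ, map_add, LinearMap.add_apply, Prod.mk.injEq]
    have e1 := sub_eq_iff_eq_add.mp (c1 a b)
    have e2 := sub_eq_iff_eq_add.mp (c2 a b)
    have e3 := sub_eq_iff_eq_add.mp (c3 x y)
    have e4 := sub_eq_iff_eq_add.mp (c4 x y)
    have e5b := eq_sub_of_add_eq (c5 b x)
    have e5a := eq_sub_of_add_eq (c5 a y)
    have e6b := eq_sub_of_add_eq (c6 b x)
    have e6a := eq_sub_of_add_eq (c6 a y)
    constructor
    · rw [e1, e5b, e5a, e3, hA'.1 (r b) (t x), hA'.1 (r a) (t y)]; abel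
    · rw [e2, e6b, e6a, e4, hV'.1 (s b) (q x), hV'.1 (s a) (q y)]; abel
end

section
/- Let (A, B, ◁, ▷) be a matched pair of Jordan algebras over a field k of characteristic ≠ 2 with bicrossed product E = A ⋈ B, and let r : B → A be a deformation map of this matched pair. Then B̃ := {(r(x), x) : x ∈ B} is a Jordan subalgebra of E which is a complement of A × {0} in E: E = (A × {0}) + B̃ and (A × {0}) ∩ B̃ = {0}. -/
/-!
The product of `(r x, x)` and `(r y, y)` in `A ⋈ B` has second component
`z = x◁r(y) + y◁r(x) + xy`, and the deformation identity for `r` says precisely that its first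
component is `r z`; so the graph of `r` is closed under the product. Being the graph of a linear
map `B → A`, it meets `A × {0}` only in `0`, and `(a, x) = (a − r x, 0) + (r x, x)`.
-/

theorem IsDefMapB.bimulJ_graph {k A B : Type*} [Field k] [AddCommGroup A] [Module k A]
    [AddCommGroup B] [Module k B] {mA : A →ₗ[k] A →ₗ[k] A} {mB : B →ₗ[k] B →ₗ[k] B}
    {l : B →ₗ[k] A →ₗ[k] B} {p : B →ₗ[k] A →ₗ[k] A} {r : B →ₗ[k] A}
    (hr : IsDefMapB mA mB l p r) (x y : B) :
    bimulJ mA mB l p (r x, x) (r y, y) =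
      (r (l x (r y) + l y (r x) + mB x y), l x (r y) + l y (r x) + mB x y) := by
  refine Prod.ext ?_ rfl
  have h := hr x y
  rw [map_add] at h
  simp only [bimulJ, map_add]
  linear_combination (norm := module) -h

theorem statement11_general {k A B : Type*} [Field k] [AddCommGroup A] [Module k A]
    [AddCommGroup B] [Module k B]
    (mA : A →ₗ[k] A →ₗ[k] A) (mB : B →ₗ[k] B →ₗ[k] B)
    (l : B →ₗ[k] A →ₗ[k] B) (p : B →ₗ[k] A →ₗ[k] A)
    (r : B →ₗ[k] A) (hr : IsDefMapB mA mB l p r) :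
    -- B̃ is a linear subspace of A ⋈ B ...
    (∀ x y : B, ((r x, x) : A × B) + (r y, y) = (r (x + y), x + y)) ∧
    (∀ (c : k) (x : B), c • ((r x, x) : A × B) = (r (c • x), c • x)) ∧
    -- ... closed under the bicrossed product multiplication
    (∀ x y : B, ∃ z : B, bimulJ mA mB l p (r x, x) (r y, y) = (r z, z)) ∧
    -- E = (A × {0}) + B̃
    (∀ e : A × B, ∃ (a : A) (x : B), e = ((a, (0 : B)) : A × B) + (r x, x)) ∧
    -- (A × {0}) ∩ B̃ = {0}
    (∀ z : A × B, z ∈ Set.range (fun x : B => ((r x, x) : A × B)) →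
      z.2 = 0 → z = 0) :=
  ⟨fun x y => by simp, fun c x => by simp, fun x y => ⟨_, hr.bimulJ_graph x y⟩,
    fun e => ⟨e.1 - r e.2, e.2, by simp⟩, by rintro _ ⟨x, rfl⟩ (hx : x = 0); simp [hx]⟩

/-- if `r : B → A` is a deformation map of a matched pair
`(A, B, ◁, ▷)`, then `B̃ = {(r x, x) : x ∈ B}` is a Jordan subalgebra of
`E = A ⋈ B` and a complement of `A × {0}` in `E`. -/
theorem statement11 {k A B : Type*} [Field k] [AddCommGroup A] [Module k A]
    [AddCommGroup B] [Module k B] (hchar : (2 : k) ≠ 0)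
    (mA : A →ₗ[k] A →ₗ[k] A) (mB : B →ₗ[k] B →ₗ[k] B)
    (l : B →ₗ[k] A →ₗ[k] B) (p : B →ₗ[k] A →ₗ[k] A)
    (hA : IsJordanAlg mA) (hB : IsJordanAlg mB)
    (hmp : IsMPair mA mB l p)
    (r : B →ₗ[k] A) (hr : IsDefMapB mA mB l p r) :
    -- B̃ is a linear subspace of A ⋈ B ...
    (∀ x y : B, ((r x, x) : A × B) + (r y, y) = (r (x + y), x + y)) ∧
    (∀ (c : k) (x : B), c • ((r x, x) : A × B) = (r (c • x), c • x)) ∧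
    -- ... closed under the bicrossed product multiplication
    (∀ x y : B, ∃ z : B, bimulJ mA mB l p (r x, x) (r y, y) = (r z, z)) ∧
    -- E = (A × {0}) + B̃
    (∀ e : A × B, ∃ (a : A) (x : B), e = ((a, (0 : B)) : A × B) + (r x, x)) ∧
    -- (A × {0}) ∩ B̃ = {0}
    (∀ z : A × B, z ∈ Set.range (fun x : B => ((r x, x) : A × B)) →
      z.2 = 0 → z = 0) :=
  statement11_general mA mB l p r hr
end

section
/- Let (A, B, ◁, ▷) be a matched pair of Jordan algebras over a field k of characteristic ≠ 2 and let r : B → A be a deformation map. Then the vector space B with the new multiplication x ·_r y := xy + x◁r(y) + y◁r(x) is a Jordan algebra (the r-deformation B_r of B): the multiplication ·_r is bilinear, commutative, and satisfies the Jordan identity. -/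
/-- V-component of the Jordan identity for the bicrossed product. -/
lemma bim_snd_aux {k A V : Type*} [Field k] [AddCommGroup A] [Module k A]
    [AddCommGroup V] [Module k V]
    (mA : A →ₗ[k] A →ₗ[k] A) (mV : V →ₗ[k] V →ₗ[k] V)
    (l : V →ₗ[k] A →ₗ[k] V) (p : V →ₗ[k] A →ₗ[k] A)
    (hA : IsJordanAlg mA) (hB : IsJordanAlg mV) (hmp : IsMPair mA mV l p)
    (z w : A × V) :
    (bimulJ mA mV l p (bimulJ mA mV l p (bimulJ mA mV l p z z) w) z).2
      = (bimulJ mA mV l p (bimulJ mA mV l p z z) (bimulJ mA mV l p w z)).2 := by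
  obtain ⟨a, x⟩ := z
  obtain ⟨b, y⟩ := w
  obtain ⟨hl, hp, h1, h2, h3, h4, h5, h6⟩ := hmp
  have hJB := hB.2 x y
  have hlact := hl y (Set.mem_univ _) a (Set.mem_univ _)
  have hMP2 := h2 b (Set.mem_univ _) x (Set.mem_univ _)
  have hMP3 := h3 a (Set.mem_univ _) b (Set.mem_univ _) x (Set.mem_univ _)
  have hMP5 := h5 a (Set.mem_univ _) x (Set.mem_univ _) y (Set.mem_univ _)
  have e1 : l (mV x y) (mA a a) = l (mV y x) (mA a a) := by rw [hB.1 x y]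
  have e2 : l (mV x y) (p x a) = l (mV y x) (p x a) := by rw [hB.1 x y]
  have e3 : l x (mA (mA a a) b) = l x (mA b (mA a a)) := by rw [hA.1 (mA a a) b]
  have e4 : mV (l x a) (mV x y) = mV (l x a) (mV y x) := by rw [hB.1 x y]
  simp only [bimulJ, map_add, LinearMap.add_apply]
  linear_combination (norm := module) hJB + hlact + hMP2 + hMP3 + hMP5
    + e1 + (2:k) • e2 + e3 + (2:k) • e4

/-- if `r : B → A` is a deformation map of a matched pair
`(A, B, ◁, ▷)`, then the `r`-deformation `B_r`, i.e. `B` with the multiplication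
`x ·_r y := xy + x◁r(y) + y◁r(x)`, is a Jordan algebra: `·_r` is bilinear,
commutative and satisfies the Jordan identity. -/
theorem statement12 {k A B : Type*} [Field k] [AddCommGroup A] [Module k A]
    [AddCommGroup B] [Module k B] (hchar : (2 : k) ≠ 0)
    (mA : A →ₗ[k] A →ₗ[k] A) (mB : B →ₗ[k] B →ₗ[k] B)
    (l : B →ₗ[k] A →ₗ[k] B) (p : B →ₗ[k] A →ₗ[k] A)
    (hA : IsJordanAlg mA) (hB : IsJordanAlg mB)
    (hmp : IsMPair mA mB l p)
    (r : B →ₗ[k] A) (hr : IsDefMapB mA mB l p r)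
    (mr : B → B → B)
    (hmr : ∀ x y, mr x y = mB x y + l x (r y) + l y (r x)) :
    IsJordanMulFun k mr := by
  have hg : ∀ u v : B, bimulJ mA mB l p (r u, u) (r v, v) = (r (mr u v), mr u v) := by
    intro u v
    have hr' := hr u v
    rw [map_add] at hr'
    refine Prod.ext ?_ ?_
    · show mA (r u) (r v) + p u (r v) + p v (r u) = r (mr u v)
      rw [hmr, map_add, map_add]
      linear_combination (norm := module) -hr'
    · show l u (r v) + l v (r u) + mB u v = mr u v
      rw [hmr]; abel
  refine ⟨?_, ?_, ?_, ?_, ?_, ?_⟩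
  · intro z z' w; simp only [hmr, map_add, LinearMap.add_apply]; abel
  · intro c z w; simp only [hmr, map_smul, LinearMap.smul_apply, smul_add]
  · intro z w w'; simp only [hmr, map_add, LinearMap.add_apply]; abel
  · intro c z w; simp only [hmr, map_smul, LinearMap.smul_apply, smul_add]
  · intro z w; rw [hmr, hmr, hB.1 z w]; abel
  · intro z w
    have key := bim_snd_aux mA mB l p hA hB hmp (r z, z) (r w, w)
    rw [hg z z, hg (mr z z) w, hg (mr (mr z z) w) z, hg w z,
      hg (mr z z) (mr w z)] at key
    exact key
end

section
/- Let (A, B, ◁, ▷) be a matched pair of Jordan algebras over a field k of characteristic ≠ 2 with bicrossed product A ⋈ B, and let r : B → A be a deformation map. Then the map f_r : B_r → A ⋈ B, f_r(x) = (r(x), x), is an injective Jordan algebra homomorphism from the r-deformation B_r to A ⋈ B; in particular B_r is isomorphic as a Jordan algebra to the subalgebra B̃ = {(r(x), x) : x ∈ B} of A ⋈ B. -/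
/-- for a deformation map `r : B → A` of a matched pair
`(A, B, ◁, ▷)`, the map `f_r : B_r → A ⋈ B`, `f_r(x) = (r x, x)`, is an
injective Jordan algebra homomorphism from the `r`-deformation `B_r`; in
particular `B_r ≅ B̃ = {(r x, x) : x ∈ B}` as Jordan algebras. -/
theorem statement13 {k A B : Type*} [Field k] [AddCommGroup A] [Module k A]
    [AddCommGroup B] [Module k B] (hchar : (2 : k) ≠ 0)
    (mA : A →ₗ[k] A →ₗ[k] A) (mB : B →ₗ[k] B →ₗ[k] B)
    (l : B →ₗ[k] A →ₗ[k] B) (p : B →ₗ[k] A →ₗ[k] A)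
    (hA : IsJordanAlg mA) (hB : IsJordanAlg mB)
    (hmp : IsMPair mA mB l p)
    (r : B →ₗ[k] A) (hr : IsDefMapB mA mB l p r) :
    -- f_r is injective
    Function.Injective (fun x : B => ((r x, x) : A × B)) ∧
    -- f_r is linear
    (∀ x y : B, ((r (x + y), x + y) : A × B) = (r x, x) + (r y, y)) ∧
    (∀ (c : k) (x : B), ((r (c • x), c • x) : A × B) = c • ((r x, x) : A × B)) ∧
    -- f_r is multiplicative from B_r to A ⋈ B
    (∀ x y : B,
      ((r (mB x y + l x (r y) + l y (r x)), mB x y + l x (r y) + l y (r x)) : A × B)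
        = bimulJ mA mB l p (r x, x) (r y, y)) ∧
    -- its image is B̃
    Set.range (fun x : B => ((r x, x) : A × B))
      = {z : A × B | ∃ x : B, z = (r x, x)} := by
  refine ⟨fun x y h => (Prod.mk.injEq _ _ _ _).mp h |>.2, ?_, ?_, ?_, ?_⟩
  · intro x y; simp [Prod.ext_iff]
  · intro c x; simp [Prod.ext_iff]
  · intro x y
    have h := hr x y
    simp only [bimulJ, Prod.mk.injEq, map_add]
    constructor
    · have := hr x y
      rw [map_add] at this
      linear_combination (norm := abel_nf) this
    · abel
  · ext z; simp [Set.range, eq_comm]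
end

section
/- Let (A, B, ◁, ▷) be a matched pair of Jordan algebras over a field k of characteristic ≠ 2 with bicrossed product E = A ⋈ B. If B̄ is a Jordan subalgebra of E with E = (A × {0}) + B̄ and (A × {0}) ∩ B̄ = {0} (i.e. B̄ is a complement of A × {0} in E), then there exists a deformation map r : B → A of the matched pair (A, B, ◁, ▷) and an isomorphism of Jordan algebras B̄ ≅ B_r, where B_r is the r-deformation of B. -/
/-- every complement `B̄` of `A × {0}` in the bicrossed product
`E = A ⋈ B` is isomorphic, as a Jordan algebra, to an `r`-deformation `B_r` of
`B` for some deformation map `r : B → A` of the matched pair `(A, B, ◁, ▷)`. -/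
theorem statement14 {k A B : Type*} [Field k] [AddCommGroup A] [Module k A]
    [AddCommGroup B] [Module k B] (hchar : (2 : k) ≠ 0)
    (mA : A →ₗ[k] A →ₗ[k] A) (mB : B →ₗ[k] B →ₗ[k] B)
    (l : B →ₗ[k] A →ₗ[k] B) (p : B →ₗ[k] A →ₗ[k] A)
    (hA : IsJordanAlg mA) (hB : IsJordanAlg mB)
    (hmp : IsMPair mA mB l p)
    -- B̄ is a Jordan subalgebra of E = A ⋈ B ...
    (S : Submodule k (A × B))
    (hSc : ∀ z ∈ S, ∀ w ∈ S, bimulJ mA mB l p z w ∈ S)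
    -- ... with E = (A × {0}) + B̄ and (A × {0}) ∩ B̄ = {0}
    (hsum : ∀ e : A × B, ∃ (a : A), ∃ z ∈ S, e = ((a, (0 : B)) : A × B) + z)
    (hint : ∀ z ∈ S, z.2 = (0 : B) → z = 0) :
    -- there is a deformation map r with B̄ ≅ B_r as Jordan algebras
    ∃ r : B →ₗ[k] A, IsDefMapB mA mB l p r ∧
      ∃ σ : B →ₗ[k] A × B, Function.Injective σ ∧
        Set.range σ = (S : Set (A × B)) ∧
        ∀ x y : B, σ (mB x y + l x (r y) + l y (r x))
          = bimulJ mA mB l p (σ x) (σ y) := by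
  classical
  -- projection S → B
  set π : S →ₗ[k] B := (LinearMap.snd k A B).comp S.subtype with hπ
  have hπinj : Function.Injective π := by
    rw [injective_iff_map_eq_zero]
    intro z hz
    have := hint z.1 z.2 hz
    exact Subtype.ext this
  have hπsurj : Function.Surjective π := by
    intro x
    obtain ⟨a, z, hz, he⟩ := hsum (0, x)
    refine ⟨⟨z, hz⟩, ?_⟩
    have : x = z.2 := by
      have := congrArg Prod.snd he
      simpa using this
    simpa [hπ] using this.symm
  let e : S ≃ₗ[k] B := LinearEquiv.ofBijective π ⟨hπinj, hπsurj⟩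
  let σ : B →ₗ[k] A × B := S.subtype.comp e.symm.toLinearMap
  have hσmem : ∀ x : B, σ x ∈ S := fun x => (e.symm x).2
  have hσsnd : ∀ x : B, (σ x).2 = x := by
    intro x
    have : π (e.symm x) = x := e.apply_symm_apply x
    simpa [hπ, σ] using this
  have hσπ : ∀ z ∈ S, σ z.2 = z := by
    intro z hz
    have : e.symm (π ⟨z, hz⟩) = ⟨z, hz⟩ := e.symm_apply_apply _
    have h2 : σ (π ⟨z, hz⟩) = z := congrArg Subtype.val this
    simpa [hπ] using h2
  set r : B →ₗ[k] A := (LinearMap.fst k A B).comp σ with hr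
  have hσ : ∀ x : B, σ x = (r x, x) := by
    intro x
    exact Prod.ext rfl (hσsnd x)
  have key : ∀ x y : B, σ (mB x y + l x (r y) + l y (r x))
      = bimulJ mA mB l p (σ x) (σ y) := by
    intro x y
    have hmem := hSc _ (hσmem x) _ (hσmem y)
    have h1 := hσπ _ hmem
    have h2 : (bimulJ mA mB l p (σ x) (σ y)).2
        = mB x y + l x (r y) + l y (r x) := by
      simp only [bimulJ, hσ]
      abel
    rw [h2] at h1
    exact h1
  refine ⟨r, ?_, σ, ?_, ?_, key⟩
  · intro x y
    have h1 := congrArg Prod.fst (key x y)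
    have h2 : (σ (mB x y + l x (r y) + l y (r x))).1
        = r (mB x y) + r (l x (r y) + l y (r x)) := by
      simp only [hr, LinearMap.comp_apply, LinearMap.fst_apply, map_add, Prod.fst_add]
      abel
    have h3 : (bimulJ mA mB l p (σ x) (σ y)).1
        = mA (r x) (r y) + p x (r y) + p y (r x) := by
      simp only [bimulJ, hσ]
    rw [h2, h3] at h1
    linear_combination (norm := abel) h1
  · intro x y hxy
    have := congrArg Prod.snd hxy
    simpa [hσsnd] using this
  · apply Set.eq_of_subset_of_subset
    · rintro _ ⟨x, rfl⟩; exact hσmem x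
    · intro z hz; exact ⟨z.2, hσπ z hz⟩
end

section
/- Let (A, B, ◁, ▷) be a matched pair of Jordan algebras over a field k of characteristic ≠ 2. Define a relation ~ on the set of deformation maps of (A, B, ◁, ▷) by: r ~ s if and only if there exists a k-linear bijection σ : B → B such that σ(xy) − σ(x)σ(y) = σ(x) ◁ s(σ(y)) − σ(x ◁ r(y)) + σ(y) ◁ s(σ(x)) − σ(y ◁ r(x)) for all x, y ∈ B. Then ~ is an equivalence relation (reflexive, symmetric, and transitive) on the set of deformation maps of (A, B, ◁, ▷). -/
/-- the relation `r ∼ s` (existence of a `k`-linear bijection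
`σ : B → B` with `σ(xy) − σ(x)σ(y) = σ(x)◁s(σ(y)) − σ(x◁r(y)) + σ(y)◁s(σ(x))
− σ(y◁r(x))`) is an equivalence relation on the set of deformation maps of the
matched pair `(A, B, ◁, ▷)`. -/
theorem statement16 {k A B : Type*} [Field k] [AddCommGroup A] [Module k A]
    [AddCommGroup B] [Module k B] (hchar : (2 : k) ≠ 0)
    (mA : A →ₗ[k] A →ₗ[k] A) (mB : B →ₗ[k] B →ₗ[k] B)
    (l : B →ₗ[k] A →ₗ[k] B) (p : B →ₗ[k] A →ₗ[k] A)
    (hA : IsJordanAlg mA) (hB : IsJordanAlg mB)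
    (hmp : IsMPair mA mB l p) :
    -- reflexivity
    (∀ r : B →ₗ[k] A, IsDefMapB mA mB l p r → DefEquivJ mB l r r) ∧
    -- symmetry
    (∀ r s : B →ₗ[k] A, IsDefMapB mA mB l p r → IsDefMapB mA mB l p s →
      DefEquivJ mB l r s → DefEquivJ mB l s r) ∧
    -- transitivity
    (∀ r s t : B →ₗ[k] A, IsDefMapB mA mB l p r → IsDefMapB mA mB l p s →
      IsDefMapB mA mB l p t →
      DefEquivJ mB l r s → DefEquivJ mB l s t → DefEquivJ mB l r t) := by
  refine ⟨?_, ?_, ?_⟩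
  · intro r _
    exact ⟨LinearMap.id, Function.bijective_id, fun x y => by simp⟩
  · rintro r s _ _ ⟨σ, hσ, hrel⟩
    let e := LinearEquiv.ofBijective σ hσ
    refine ⟨e.symm.toLinearMap, e.symm.bijective, fun x y => ?_⟩
    have h := hrel (e.symm x) (e.symm y)
    have hx : σ (e.symm x) = x := e.apply_symm_apply x
    have hy : σ (e.symm y) = y := e.apply_symm_apply y
    rw [hx, hy] at h
    have h2 : mB (e.symm x) (e.symm y) - e.symm (mB x y)
        = e.symm (l x (s y)) - l (e.symm x) (r (e.symm y))
          + e.symm (l y (s x)) - l (e.symm y) (r (e.symm x)) := by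
      have hinv : ∀ z : B, e.symm (σ z) = z := fun z => e.symm_apply_apply z
      have h3 := congrArg e.symm h
      simp only [map_sub, map_add, hinv] at h3
      exact h3
    simp only [LinearEquiv.coe_coe]
    rw [show e.symm (mB x y) - mB (e.symm x) (e.symm y)
        = -(mB (e.symm x) (e.symm y) - e.symm (mB x y)) from (neg_sub _ _).symm, h2]
    abel
  · rintro r s t _ _ _ ⟨σ, hσ, h1⟩ ⟨τ, hτ, h2⟩
    refine ⟨τ.comp σ, hτ.comp hσ, fun x y => ?_⟩
    have H1 := congrArg τ (h1 x y)
    simp only [map_sub, map_add] at H1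
    have H2 := h2 (σ x) (σ y)
    have key : (τ.comp σ) (mB x y) - mB ((τ.comp σ) x) ((τ.comp σ) y)
        = (τ (σ (mB x y)) - τ (mB (σ x) (σ y)))
          + (τ (mB (σ x) (σ y)) - mB (τ (σ x)) (τ (σ y))) := by
      simp only [LinearMap.comp_apply]; abel
    rw [key, H1, H2]
    simp only [LinearMap.comp_apply]
    abel
end

section
/- Let A be the real Jordan algebra with basis {a, b} and multiplication a² = a, b² = b, ab = 0, and let V be the real Jordan algebra with basis {u, v} and multiplication u² = u, v² = 0, uv = 0. Let ▷ : V × A → A be the zero map and let ◁ : V × A → V be the bilinear map with u ◁ a = u ◁ b = 0, v ◁ a = v ◁ b = (1/2)v; then (A, V, ◁, ▷) is a matched pair of Jordan algebras, and a linear map r : V → A is a deformation map of this matched pair if and only if it belongs to one of the following six families (for some α ∈ ℝ): (i) r(u) = 0, r(v) = αb; (ii) r(u) = 0, r(v) = αa; (iii) r(u) = a + b, r(v) = αb; (iv) r(u) = a + b, r(v) = αa; (v) r(u) = a, r(v) = 0; (vi) r(u) = b, r(v) = 0. -/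
/-!
The left action `▷` vanishes and all other structure maps are explicit bilinear formulas in the
coordinates, so the matched-pair axioms are polynomial identities. A linear `r` is determined by
`P = r u` and `Q = r v`, and the deformation identity is bilinear in `(x, y)`; on the pairs
`(u, u)`, `(v, v)`, `(u, v)` it reads `P² = P` in `A`, `Q₁ Q₂ = 0` and `(P₁ - P₂) Q = 0`.
Hence `P ∈ {0, a, b, a + b}`, and `Q` vanishes unless `P₁ = P₂`, in which case it lies on a
coordinate axis.
-/

theorem LinearMap.apply_eq_fst_smul_add_snd_smul {R M : Type*} [CommSemiring R]
    [AddCommMonoid M] [Module R M] (f : R × R →ₗ[R] M) (z : R × R) :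
    f z = z.1 • f (1, 0) + z.2 • f (0, 1) := by
  have hz : z = z.1 • ((1 : R), (0 : R)) + z.2 • ((0 : R), (1 : R)) := by
    ext <;> simp
  conv_lhs => rw [hz]
  rw [map_add, map_smul, map_smul]

def DeformationEquations (P Q : ℝ × ℝ) : Prop :=
  P.1 * P.1 = P.1 ∧ P.2 * P.2 = P.2 ∧ Q.1 * Q.2 = 0 ∧
    (P.1 - P.2) * Q.1 = 0 ∧ (P.1 - P.2) * Q.2 = 0

section HalfTraceAction

variable {mA mV l p : (ℝ × ℝ) →ₗ[ℝ] (ℝ × ℝ) →ₗ[ℝ] (ℝ × ℝ)}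

theorem isMPair_of_halfTrace_action
    (hmA : ∀ z w : ℝ × ℝ, mA z w = (z.1 * w.1, z.2 * w.2))
    (hmV : ∀ z w : ℝ × ℝ, mV z w = (z.1 * w.1, 0))
    (hl : ∀ x c : ℝ × ℝ, l x c = (0, (1 / 2 : ℝ) * x.2 * (c.1 + c.2)))
    (hp : ∀ x c : ℝ × ℝ, p x c = 0) :
    IsMPair mA mV l p := by
  refine ⟨?_, ?_, ?_, ?_, ?_, ?_, ?_, ?_⟩ <;>
    (intros x _ a _; try intros y _) <;>
    simp only [hmA, hmV, hl, hp, Prod.smul_def, Prod.mk_add_mk, smul_eq_mul,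
      Prod.fst_zero, Prod.snd_zero, Prod.mk.injEq, add_zero, mul_zero, zero_mul] <;>
    constructor <;> first | trivial | ring

theorem deformationEquations_of_isDefMapB
    (hmA : ∀ z w : ℝ × ℝ, mA z w = (z.1 * w.1, z.2 * w.2))
    (hmV : ∀ z w : ℝ × ℝ, mV z w = (z.1 * w.1, 0))
    (hl : ∀ x c : ℝ × ℝ, l x c = (0, (1 / 2 : ℝ) * x.2 * (c.1 + c.2)))
    (hp : ∀ x c : ℝ × ℝ, p x c = 0) {r : (ℝ × ℝ) →ₗ[ℝ] (ℝ × ℝ)}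
    (hr : IsDefMapB mA mV l p r) : DeformationEquations (r (1, 0)) (r (0, 1)) := by
  set Q := r (0, 1)
  have hv (c : ℝ) : r (0, c) = c • Q := by
    rw [show ((0 : ℝ), c) = c • ((0 : ℝ), (1 : ℝ)) by simp, map_smul]
  have huu := hr (1, 0) (1, 0)
  have hvv := hr (0, 1) (0, 1)
  have huv := hr (1, 0) (0, 1)
  simp only [hmA, hmV, hl, hp] at huu hvv huv
  simp only [mul_one, mul_zero, zero_mul, add_zero, zero_add, Prod.mk_zero_zero, map_zero, hv,
    Prod.mk_add_mk, Prod.ext_iff, Prod.fst_sub, Prod.snd_sub, Prod.fst_neg, Prod.snd_neg,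
    Prod.fst_zero, Prod.snd_zero, Prod.smul_fst, Prod.smul_snd, smul_eq_mul, one_mul, zero_sub]
    at huu hvv huv
  exact ⟨by linear_combination -huu.1, by linear_combination -huu.2, by linear_combination hvv.1,
    by linear_combination -2 * huv.1, by linear_combination 2 * huv.2⟩

theorem isDefMapB_of_deformationEquations
    (hmA : ∀ z w : ℝ × ℝ, mA z w = (z.1 * w.1, z.2 * w.2))
    (hmV : ∀ z w : ℝ × ℝ, mV z w = (z.1 * w.1, 0))
    (hl : ∀ x c : ℝ × ℝ, l x c = (0, (1 / 2 : ℝ) * x.2 * (c.1 + c.2)))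
    (hp : ∀ x c : ℝ × ℝ, p x c = 0) {r : (ℝ × ℝ) →ₗ[ℝ] (ℝ × ℝ)}
    (hr : DeformationEquations (r (1, 0)) (r (0, 1))) : IsDefMapB mA mV l p r := by
  obtain ⟨hP₁, hP₂, hQ, hQ₁, hQ₂⟩ := hr
  intro x y
  rw [r.apply_eq_fst_smul_add_snd_smul (mV x y),
    r.apply_eq_fst_smul_add_snd_smul (l x (r y) + l y (r x)),
    r.apply_eq_fst_smul_add_snd_smul x, r.apply_eq_fst_smul_add_snd_smul y]
  simp only [hmA, hmV, hl, hp, Prod.smul_def, smul_eq_mul, Prod.mk_add_mk, Prod.fst_add,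
    Prod.snd_add, Prod.ext_iff, Prod.fst_sub, Prod.snd_sub, Prod.fst_zero, Prod.snd_zero]
  constructor
  · linear_combination -(x.1 * y.1) * hP₁ - (x.1 * y.2 + x.2 * y.1) / 2 * hQ₁ + x.2 * y.2 * hQ
  · linear_combination -(x.1 * y.1) * hP₂ + (x.1 * y.2 + x.2 * y.1) / 2 * hQ₂ + x.2 * y.2 * hQ

end HalfTraceAction

theorem deformationEquations_iff (P Q : ℝ × ℝ) :
    DeformationEquations P Q ↔
      ((∃ α : ℝ, P = 0 ∧ Q = (0, α)) ∨
       (∃ α : ℝ, P = 0 ∧ Q = (α, 0)) ∨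
       (∃ α : ℝ, P = (1, 1) ∧ Q = (0, α)) ∨
       (∃ α : ℝ, P = (1, 1) ∧ Q = (α, 0)) ∨
       (P = (1, 0) ∧ Q = 0) ∨
       (P = (0, 1) ∧ Q = 0)) := by
  constructor
  · obtain ⟨p₁, p₂⟩ := P
    obtain ⟨q₁, q₂⟩ := Q
    rintro ⟨hp₁, hp₂, hq, hq₁, hq₂⟩
    dsimp only at hp₁ hp₂ hq hq₁ hq₂
    rcases IsIdempotentElem.iff_eq_zero_or_one.mp hp₁ with rfl | rfl <;>
      rcases IsIdempotentElem.iff_eq_zero_or_one.mp hp₂ with rfl | rfl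
    · rcases mul_eq_zero.mp hq with rfl | rfl
      · exact Or.inl ⟨q₂, rfl, rfl⟩
      · exact Or.inr <| Or.inl ⟨q₁, rfl, rfl⟩
    · obtain ⟨rfl, rfl⟩ : q₁ = 0 ∧ q₂ = 0 := ⟨by linarith, by linarith⟩
      exact Or.inr <| Or.inr <| Or.inr <| Or.inr <| Or.inr ⟨rfl, rfl⟩
    · obtain ⟨rfl, rfl⟩ : q₁ = 0 ∧ q₂ = 0 := ⟨by linarith, by linarith⟩
      exact Or.inr <| Or.inr <| Or.inr <| Or.inr <| Or.inl ⟨rfl, rfl⟩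
    · rcases mul_eq_zero.mp hq with rfl | rfl
      · exact Or.inr <| Or.inr <| Or.inl ⟨q₂, rfl, rfl⟩
      · exact Or.inr <| Or.inr <| Or.inr <| Or.inl ⟨q₁, rfl, rfl⟩
  · rintro (⟨α, rfl, rfl⟩ | ⟨α, rfl, rfl⟩ | ⟨α, rfl, rfl⟩ | ⟨α, rfl, rfl⟩ | ⟨rfl, rfl⟩ |
      ⟨rfl, rfl⟩) <;> norm_num [DeformationEquations]

/-- for the real Jordan algebras `A = ⟨a, b | a² = a, b² = b,
ab = 0⟩` and `V = ⟨u, v | u² = u, v² = 0, uv = 0⟩` (realized on `ℝ × ℝ` with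
`a = u = (1,0)`, `b = v = (0,1)`), the trivial `▷` and the action
`v ◁ a = v ◁ b = (1/2)v`, `u ◁ a = u ◁ b = 0` form a matched pair, and the
deformation maps of this matched pair are exactly the six listed families. -/
theorem statement18
    (mA : (ℝ × ℝ) →ₗ[ℝ] (ℝ × ℝ) →ₗ[ℝ] (ℝ × ℝ))
    (hmA : ∀ z w : ℝ × ℝ, mA z w = (z.1 * w.1, z.2 * w.2))
    (mV : (ℝ × ℝ) →ₗ[ℝ] (ℝ × ℝ) →ₗ[ℝ] (ℝ × ℝ))
    (hmV : ∀ z w : ℝ × ℝ, mV z w = (z.1 * w.1, 0))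
    (l : (ℝ × ℝ) →ₗ[ℝ] (ℝ × ℝ) →ₗ[ℝ] (ℝ × ℝ))
    (hl : ∀ x c : ℝ × ℝ, l x c = (0, (1 / 2 : ℝ) * x.2 * (c.1 + c.2)))
    (p : (ℝ × ℝ) →ₗ[ℝ] (ℝ × ℝ) →ₗ[ℝ] (ℝ × ℝ))
    (hp : ∀ x c : ℝ × ℝ, p x c = 0) :
    -- (A, V, ◁, ▷) is a matched pair of Jordan algebras
    IsMPair mA mV l p ∧
    -- classification of the deformation maps (u = (1,0), v = (0,1), a = (1,0), b = (0,1))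
    (∀ r : (ℝ × ℝ) →ₗ[ℝ] (ℝ × ℝ),
      IsDefMapB mA mV l p r ↔
        ((∃ α : ℝ, r (1, 0) = 0 ∧ r (0, 1) = (0, α)) ∨
         (∃ α : ℝ, r (1, 0) = 0 ∧ r (0, 1) = (α, 0)) ∨
         (∃ α : ℝ, r (1, 0) = (1, 1) ∧ r (0, 1) = (0, α)) ∨
         (∃ α : ℝ, r (1, 0) = (1, 1) ∧ r (0, 1) = (α, 0)) ∨
         (r (1, 0) = (1, 0) ∧ r (0, 1) = 0) ∨
         (r (1, 0) = (0, 1) ∧ r (0, 1) = 0))) := by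
  refine ⟨isMPair_of_halfTrace_action hmA hmV hl hp, fun r => ?_⟩
  rw [← deformationEquations_iff]
  exact ⟨deformationEquations_of_isDefMapB hmA hmV hl hp,
    isDefMapB_of_deformationEquations hmA hmV hl hp⟩
end

section
/- Let J₅ be the 4-dimensional real Jordan algebra with basis {a, b, u, v} and commutative multiplication determined by a² = a, b² = b, au = (1/2)u, bu = (1/2)u, av = v, and all other products of basis elements zero. Let A be the real Jordan algebra with basis {a, b} and multiplication a² = a, b² = b, ab = 0, and let V be the 2-dimensional abelian real Jordan algebra with basis {u, v}. Then the bilinear map ◁ : V × A → V determined by v ◁ a = v, u ◁ a = u ◁ b = (1/2)u, v ◁ b = 0 is a right action of A on V satisfying conditions (R1)–(R3), and the map ψ : A ⋊ V → J₅, ψ(x, y) = x + y, from the corresponding right semidirect product to J₅, is an isomorphism of Jordan algebras. -/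
/-- the 4-dimensional real Jordan algebra `J₅` (basis `a, b, u, v`
with `a² = a`, `b² = b`, `au = bu = (1/2)u`, `av = v` and all other products
zero, realized on `ℝ × ℝ × ℝ × ℝ`) is the right semidirect product `A ⋊ V` of
`A = ⟨a, b | a² = a, b² = b, ab = 0⟩` and the 2-dimensional abelian `V`, for the
right action `v ◁ a = v`, `u ◁ a = u ◁ b = (1/2)u`, `v ◁ b = 0`; this action
satisfies (R1)-(R3) and `ψ(x, y) = x + y` is a Jordan algebra isomorphism. -/
theorem statement19
    (mJ : (ℝ × ℝ × ℝ × ℝ) →ₗ[ℝ] (ℝ × ℝ × ℝ × ℝ) →ₗ[ℝ] (ℝ × ℝ × ℝ × ℝ))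
    (hmJ : ∀ z w : ℝ × ℝ × ℝ × ℝ,
      mJ z w = (z.1 * w.1, z.2.1 * w.2.1,
        (1 / 2 : ℝ) * (z.1 * w.2.2.1 + z.2.2.1 * w.1
          + z.2.1 * w.2.2.1 + z.2.2.1 * w.2.1),
        z.1 * w.2.2.2 + z.2.2.2 * w.1))
    (mA : (ℝ × ℝ) →ₗ[ℝ] (ℝ × ℝ) →ₗ[ℝ] (ℝ × ℝ))
    (hmA : ∀ c d : ℝ × ℝ, mA c d = (c.1 * d.1, c.2 * d.2))
    (mV : (ℝ × ℝ) →ₗ[ℝ] (ℝ × ℝ) →ₗ[ℝ] (ℝ × ℝ))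
    (hmV : ∀ x y : ℝ × ℝ, mV x y = 0)
    (l : (ℝ × ℝ) →ₗ[ℝ] (ℝ × ℝ) →ₗ[ℝ] (ℝ × ℝ))
    (hl : ∀ x c : ℝ × ℝ, l x c = ((1 / 2 : ℝ) * x.1 * (c.1 + c.2), x.2 * c.1))
    (ψ : ((ℝ × ℝ) × (ℝ × ℝ)) →ₗ[ℝ] (ℝ × ℝ × ℝ × ℝ))
    (hψ : ∀ z : (ℝ × ℝ) × (ℝ × ℝ), ψ z = (z.1.1, z.1.2, z.2.1, z.2.2)) :
    -- ◁ is a right action of A on V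
    (∀ (x c : ℝ × ℝ), l (l x (mA c c)) c = l (l x c) (mA c c)) ∧
    -- (R1)
    (∀ (c x : ℝ × ℝ), mV x (l (mV x x) c) = mV (mV x x) (l x c)) ∧
    -- (R2)
    (∀ (c d x : ℝ × ℝ),
      (2 : ℝ) • (l (l (l x c) d) c - l (l x c) (mA d c) + mV (l (l x c) d) x
          - mV (l x c) (l x d))
        = l (mV x x) (mA d c) - l (l (mV x x) d) c + l (l x d) (mA c c)
          - l x (mA d (mA c c))) ∧
    -- (R3)
    (∀ (c x y : ℝ × ℝ),
      (2 : ℝ) • (l (mV (l x c) y) c - mV (l x c) (l y c) + mV (mV (l x c) y) x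
          - mV (l x c) (mV x y))
        = l (mV x y) (mA c c) - mV (l y (mA c c)) x + mV (mV x x) (l y c)
          - l (mV (mV x x) y) c) ∧
    -- ψ : A ⋊ V → J₅ is an isomorphism of Jordan algebras
    Function.Bijective ψ ∧
    (∀ z w : (ℝ × ℝ) × (ℝ × ℝ),
      ψ (rsemimulJ mA mV l z w) = mJ (ψ z) (ψ w)) := by
  have hP : ∀ p q : ℝ × ℝ, p = q ↔ p.1 = q.1 ∧ p.2 = q.2 := fun p q => Prod.ext_iff
  refine ⟨?_, ?_, ?_, ?_, ?_, ?_⟩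
  · intro x c
    rw [hP]
    simp only [hl, hmA]
    constructor <;> ring
  · intro c x; simp [hmV]
  · intro c x y
    rw [hP]
    simp only [hl, hmA, hmV, Prod.smul_mk, smul_eq_mul, Prod.fst_add, Prod.snd_add,
      Prod.fst_sub, Prod.snd_sub, Prod.fst_zero, Prod.snd_zero, smul_zero, Prod.smul_fst,
      Prod.smul_snd, map_zero, LinearMap.zero_apply]
    constructor <;> ring
  · intro c x y
    rw [hP]
    simp only [hl, hmA, hmV, Prod.smul_mk, smul_eq_mul, Prod.fst_add, Prod.snd_add,
      Prod.fst_sub, Prod.snd_sub, Prod.fst_zero, Prod.snd_zero, smul_zero, Prod.smul_fst,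
      Prod.smul_snd, map_zero, LinearMap.zero_apply]
    constructor <;> ring
  · constructor
    · intro z w h
      rw [hψ, hψ, Prod.ext_iff, Prod.ext_iff, Prod.ext_iff] at h
      obtain ⟨h1, h2, h3, h4⟩ := h
      exact Prod.ext (Prod.ext h1 h2) (Prod.ext h3 h4)
    · intro w
      exact ⟨((w.1, w.2.1), (w.2.2.1, w.2.2.2)), by rw [hψ]⟩
  · intro z w
    simp only [rsemimulJ, hψ, hmJ, hmA, hmV, hl, Prod.ext_iff, Prod.fst_add, Prod.snd_add,
      Prod.fst_zero, Prod.snd_zero, add_zero]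
    exact ⟨trivial, trivial, by ring, by ring⟩
end
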